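/- arXiv:2404.12640 — 5 statements merged into one kernel-verified Lean document; each statement's English description precedes it below -/
import Mathlib

section
/- Let M = ∩_{i ∈ P} Ĥ_i be nonempty and bounded, c ≠ 0, and let x̄ ∈ M be a maximizer of the objective function ⟨c, x⟩ over M. Then x̄ lies on the boundary of the recessive polytope M̂ = ∩_{i ∈ I} Ĥ_i; equivalently, there exists a recessive index i ∈ I (i.e., ⟨a_i, c⟩ > 0) such that ⟨a_i, x̄⟩ = b_i. -/
open scoped RealInnerProductSpace

/-- If `x̄` maximizes the objective `⟪c, ·⟫` over the nonempty bounded feasible polytope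
`M`, then `x̄` lies on the boundary of the recessive polytope: some recessive constraint
(`⟪a i, c⟫ > 0`) is satisfied with equality at `x̄`. -/
theorem solution_on_recessive_boundary {n m : ℕ} (hm : 1 < m)
    (a : Fin m → EuclideanSpace ℝ (Fin n)) (b : Fin m → ℝ)
    (ha : ∀ i, a i ≠ 0)
    (c : EuclideanSpace ℝ (Fin n)) (hc : c ≠ 0)
    (M : Set (EuclideanSpace ℝ (Fin n)))
    (hM : M = ⋂ i, {x : EuclideanSpace ℝ (Fin n) | ⟪a i, x⟫ ≤ b i})
    (hne : M.Nonempty) (hbd : Bornology.IsBounded M)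
    (xbar : EuclideanSpace ℝ (Fin n)) (hxbar : xbar ∈ M)
    (hmax : ∀ x ∈ M, ⟪c, x⟫ ≤ ⟪c, xbar⟫) :
    ∃ i : Fin m, 0 < ⟪a i, c⟫ ∧ ⟪a i, xbar⟫ = b i := by
  by_contra h
  push_neg at h
  have hx : ∀ i, ⟪a i, xbar⟫ ≤ b i := by
    intro i
    have hx' := hxbar
    rw [hM] at hx'
    exact Set.mem_iInter.1 hx' i
  have hlt : ∀ i, 0 < ⟪a i, c⟫ → ⟪a i, xbar⟫ < b i :=
    fun i hi => lt_of_le_of_ne (hx i) (h i hi)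
  set S := Finset.univ.filter (fun i : Fin m => 0 < ⟪a i, c⟫) with hS
  set ε : ℝ := if hSn : S.Nonempty then
      min 1 (S.inf' hSn (fun i => (b i - ⟪a i, xbar⟫) / ⟪a i, c⟫)) else 1 with hε
  have hεpos : 0 < ε := by
    rw [hε]; split_ifs with hSn
    · apply lt_min one_pos
      apply (Finset.lt_inf'_iff _).2
      intro i hi
      have hic : 0 < ⟪a i, c⟫ := (Finset.mem_filter.1 hi).2
      exact div_pos (sub_pos.2 (hlt i hic)) hic
    · exact one_pos
  have hmem : xbar + ε • c ∈ M := by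
    rw [hM, Set.mem_iInter]
    intro i
    simp only [Set.mem_setOf_eq, inner_add_right, real_inner_smul_right]
    rcases le_or_gt ⟪a i, c⟫ 0 with hle | hpos
    · nlinarith [hx i]
    · have hiS : i ∈ S := Finset.mem_filter.2 ⟨Finset.mem_univ i, hpos⟩
      have hSn : S.Nonempty := ⟨i, hiS⟩
      have hεle : ε ≤ (b i - ⟪a i, xbar⟫) / ⟪a i, c⟫ := by
        rw [hε, dif_pos hSn]
        exact (min_le_right _ _).trans (Finset.inf'_le _ hiS)
      have := (le_div_iff₀ hpos).1 hεle
      linarith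
  have hle := hmax _ hmem
  rw [inner_add_right, real_inner_smul_right] at hle
  have hc' : ‖c‖ ≠ 0 := norm_ne_zero_iff.2 hc
  have hcc : 0 < ⟪c, c⟫ := by rw [real_inner_self_eq_norm_sq]; positivity
  nlinarith
end

section
/- Let M̂ = ∩_{i ∈ I} Ĥ_i be the recessive polytope, where I is finite and nonempty and ⟨a_i, c⟩ > 0 for all i ∈ I. Then for any point u in the boundary Γ(M̂) of M̂, there exists ε > 0 such that for every boundary point w of M̂ in the open ε-ball around u there exists i' ∈ I with ⟨a_{i'}, u⟩ = b_{i'} and ⟨a_{i'}, w⟩ = b_{i'}, i.e., both u and w lie on the hyperplane H_{i'}. -/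
open scoped RealInnerProductSpace

/-- For any boundary point `u` of the recessive polytope `M̂ = ⋂ i, {x | ⟪a i, x⟫ ≤ b i}`
(all constraints recessive: `⟪a i, c⟫ > 0`), there exists `ε > 0` such that every
boundary point `w` of `M̂` in the open `ε`-ball around `u` lies, together with `u`,
on a common bounding hyperplane `H_{i'}`. -/
theorem recessive_boundary_local_common_hyperplane {n : ℕ} {ι : Type*}
    [Fintype ι] [Nonempty ι]
    (c : EuclideanSpace ℝ (Fin n)) (hc : c ≠ 0)
    (a : ι → EuclideanSpace ℝ (Fin n)) (b : ι → ℝ)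
    (ha : ∀ i, a i ≠ 0) (hrec : ∀ i, 0 < ⟪a i, c⟫)
    (Mhat : Set (EuclideanSpace ℝ (Fin n)))
    (hMhat : Mhat = ⋂ i, {x : EuclideanSpace ℝ (Fin n) | ⟪a i, x⟫ ≤ b i}) :
    ∀ u ∈ frontier Mhat, ∃ ε > (0 : ℝ),
      ∀ w ∈ frontier Mhat, w ∈ Metric.ball u ε →
        ∃ i' : ι, ⟪a i', u⟫ = b i' ∧ ⟪a i', w⟫ = b i' := by
  classical
  subst hMhat
  intro u hu
  set M : Set (EuclideanSpace ℝ (Fin n)) :=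
    ⋂ i, {x : EuclideanSpace ℝ (Fin n) | ⟪a i, x⟫ ≤ b i} with hM
  have hcont : ∀ i, Continuous fun x : EuclideanSpace ℝ (Fin n) => ⟪a i, x⟫ :=
    fun i => (innerSL ℝ (a i)).continuous
  have hclosed : IsClosed M :=
    isClosed_iInter fun i => isClosed_le (hcont i) continuous_const
  have hfr : ∀ x, x ∈ frontier M → ∃ i, ⟪a i, x⟫ = b i := by
    intro x hx
    by_contra h
    push_neg at h
    have hxM : x ∈ M := hclosed.closure_eq ▸ hx.1
    have hlt : ∀ i, ⟪a i, x⟫ < b i := fun i =>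
      lt_of_le_of_ne (Set.mem_iInter.mp hxM i) (h i)
    have hopen : IsOpen (⋂ i, {y : EuclideanSpace ℝ (Fin n) | ⟪a i, y⟫ < b i}) :=
      isOpen_iInter_of_finite fun i => isOpen_lt (hcont i) continuous_const
    have hsub : (⋂ i, {y : EuclideanSpace ℝ (Fin n) | ⟪a i, y⟫ < b i}) ⊆ M :=
      fun y hy => Set.mem_iInter.mpr fun i => le_of_lt (show ⟪a i, y⟫ < b i from Set.mem_iInter.mp hy i)
    exact hx.2 (interior_maximal hsub hopen (Set.mem_iInter.mpr hlt))
  have huM : u ∈ M := hclosed.closure_eq ▸ hu.1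
  set f : ι → ℝ := fun i =>
    if ⟪a i, u⟫ < b i then (b i - ⟪a i, u⟫) / ‖a i‖ else 1 with hf
  set ε : ℝ := Finset.univ.inf' Finset.univ_nonempty f with hε
  have hεpos : 0 < ε := by
    rw [hε, Finset.lt_inf'_iff]
    intro i _
    rw [hf]
    dsimp only
    split_ifs with hi
    · exact div_pos (sub_pos.mpr hi) (norm_pos_iff.mpr (ha i))
    · exact one_pos
  refine ⟨ε, hεpos, ?_⟩
  intro w hw hball
  obtain ⟨i', hi'w⟩ := hfr w hw
  have hule : ⟪a i', u⟫ ≤ b i' := Set.mem_iInter.mp huM i'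
  have hueq : ⟪a i', u⟫ = b i' := by
    by_contra hne
    have hlt : ⟪a i', u⟫ < b i' := lt_of_le_of_ne hule hne
    have hεle : ε ≤ (b i' - ⟪a i', u⟫) / ‖a i'‖ := by
      have h1 : ε ≤ f i' := Finset.inf'_le f (Finset.mem_univ i')
      simp only [hf] at h1
      rwa [if_pos hlt] at h1
    have hdist : dist w u < (b i' - ⟪a i', u⟫) / ‖a i'‖ :=
      lt_of_lt_of_le (Metric.mem_ball.mp hball) hεle
    have hnorm : ‖a i'‖ * ‖w - u‖ < b i' - ⟪a i', u⟫ := by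
      have hpos : (0 : ℝ) < ‖a i'‖ := norm_pos_iff.mpr (ha i')
      rw [dist_eq_norm] at hdist
      calc ‖a i'‖ * ‖w - u‖ < ‖a i'‖ * ((b i' - ⟪a i', u⟫) / ‖a i'‖) := by
            exact mul_lt_mul_of_pos_left hdist hpos
        _ = b i' - ⟪a i', u⟫ := by field_simp
    have hinner : ⟪a i', w - u⟫ ≤ ‖a i'‖ * ‖w - u‖ := real_inner_le_norm _ _
    have : ⟪a i', w⟫ < b i' := by
      have hsplit : ⟪a i', w⟫ = ⟪a i', u⟫ + ⟪a i', w - u⟫ := by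
        rw [inner_sub_right]; ring
      rw [hsplit]
      linarith
    exact absurd hi'w (ne_of_lt this)
  exact ⟨i', hueq, hi'w⟩
end

section
/- Let M̂ = ∩_{i ∈ I} Ĥ_i be the recessive polytope, I finite and nonempty, with ⟨a_i, c⟩ > 0 for all i ∈ I. Fix z ∈ ℝⁿ and let i' ∈ I attain the minimum of the biases β_i(z) over i ∈ I. Then the line L(z) = {z + λc : λ ∈ ℝ} through z parallel to c intersects the boundary Γ(M̂) of M̂ in exactly one point, and this point equals γ_{i'}(z), the objective projection of z onto the hyperplane H_{i'} of minimum bias: L(z) ∩ Γ(M̂) = { γ_{i'}(z) }. -/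
open scoped RealInnerProductSpace

/-- The line through `z` parallel to `c` meets the boundary of the recessive polytope
`M̂` in exactly one point, namely the objective projection `γ_{i'}(z)` of `z` onto the
hyperplane `H_{i'}` of minimal bias `β_{i'}(z) = min {β_i(z) : i ∈ I}`. -/
theorem objective_projection_onto_recessive_boundary {n : ℕ} {ι : Type*}
    [Fintype ι] [Nonempty ι]
    (c : EuclideanSpace ℝ (Fin n)) (hc : c ≠ 0)
    (a : ι → EuclideanSpace ℝ (Fin n)) (b : ι → ℝ)
    (ha : ∀ i, a i ≠ 0) (hrec : ∀ i, 0 < ⟪a i, c⟫)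
    (Mhat : Set (EuclideanSpace ℝ (Fin n)))
    (hMhat : Mhat = ⋂ i, {x : EuclideanSpace ℝ (Fin n) | ⟪a i, x⟫ ≤ b i})
    (z : EuclideanSpace ℝ (Fin n)) (i' : ι)
    (hmin : ∀ i : ι, -((⟪a i', z⟫ - b i') / ⟪a i', c⟫) * ‖c‖ ≤
      -((⟪a i, z⟫ - b i) / ⟪a i, c⟫) * ‖c‖) :
    {y : EuclideanSpace ℝ (Fin n) | ∃ lam : ℝ, y = z + lam • c} ∩ frontier Mhat =
      {z - ((⟪a i', z⟫ - b i') / ⟪a i', c⟫) • c} := by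
  set lamstar : ℝ := -((⟪a i', z⟫ - b i') / ⟪a i', c⟫) with hls
  clear_value lamstar
  have hcn : (0:ℝ) < ‖c‖ := norm_pos_iff.mpr hc
  have hmin' : ∀ i, lamstar ≤ -((⟪a i, z⟫ - b i) / ⟪a i, c⟫) :=
    fun i => le_of_mul_le_mul_right (hmin i) hcn
  have key : ∀ (i : ι) (t : ℝ), ⟪a i, z + t • c⟫ = ⟪a i, z⟫ + t * ⟪a i, c⟫ := by
    intro i t; rw [inner_add_right, real_inner_smul_right]
  have hlam_le : ∀ i t, t ≤ -((⟪a i, z⟫ - b i) / ⟪a i, c⟫) ↔ ⟪a i, z + t • c⟫ ≤ b i := by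
    intro i t
    rw [key, show -((⟪a i, z⟫ - b i) / ⟪a i, c⟫) = (b i - ⟪a i, z⟫) / ⟪a i, c⟫ by ring,
      le_div_iff₀ (hrec i)]
    constructor <;> intro h <;> nlinarith [hrec i]
  have hMclosed : IsClosed Mhat := by
    rw [hMhat]
    exact isClosed_iInter fun i => isClosed_le ((innerSL ℝ (a i)).continuous) continuous_const
  have hU : (⋂ i, {x : EuclideanSpace ℝ (Fin n) | ⟪a i, x⟫ < b i}) ⊆ interior Mhat := by
    apply interior_maximal
    · rw [hMhat]; exact Set.iInter_mono fun i => Set.setOf_subset_setOf.mpr fun x => le_of_lt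
    · exact isOpen_iInter_of_finite fun i =>
        isOpen_lt ((innerSL ℝ (a i)).continuous) continuous_const
  have hps : z - ((⟪a i', z⟫ - b i') / ⟪a i', c⟫) • c = z + lamstar • c := by
    rw [hls, neg_smul, sub_eq_add_neg]
  have hpmem : z + lamstar • c ∈ Mhat := by
    rw [hMhat]
    exact Set.mem_iInter.mpr fun i => (hlam_le i lamstar).mp (hmin' i)
  ext y
  simp only [Set.mem_inter_iff, Set.mem_setOf_eq, Set.mem_singleton_iff]
  constructor
  · rintro ⟨⟨lam, rfl⟩, hfr⟩
    have hmem : ∀ i, lam ≤ -((⟪a i, z⟫ - b i) / ⟪a i, c⟫) := by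
      intro i
      have hcl : z + lam • c ∈ Mhat := hMclosed.closure_eq ▸ (frontier_subset_closure hfr)
      rw [hMhat, Set.mem_iInter] at hcl
      exact (hlam_le i lam).mpr (hcl i)
    have hle : lam ≤ lamstar := hls ▸ hmem i'
    rcases lt_or_eq_of_le hle with hlt | heq
    · exfalso
      have hint : z + lam • c ∈ interior Mhat := by
        apply hU
        refine Set.mem_iInter.mpr fun i => ?_
        have hlt' : lam < -((⟪a i, z⟫ - b i) / ⟪a i, c⟫) := lt_of_lt_of_le hlt (hmin' i)
        simp only [Set.mem_setOf_eq, key]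
        rw [show -((⟪a i, z⟫ - b i) / ⟪a i, c⟫) = (b i - ⟪a i, z⟫) / ⟪a i, c⟫ by ring,
          lt_div_iff₀ (hrec i)] at hlt'
        nlinarith
      rw [frontier_eq_closure_inter_closure] at hfr
      have := hfr.2
      rw [closure_compl] at this
      exact this hint
    · rw [hps, heq]
  · rintro rfl
    refine ⟨⟨lamstar, hps⟩, ?_⟩
    rw [hps, frontier_eq_closure_inter_closure]
    refine ⟨subset_closure hpmem, ?_⟩
    have htend : Filter.Tendsto (fun k : ℕ => z + (lamstar + 1/(k+1)) • c) Filter.atTop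
        (nhds (z + lamstar • c)) := by
      have h0 : Filter.Tendsto (fun k : ℕ => lamstar + 1/(k+1:ℝ)) Filter.atTop
          (nhds (lamstar + 0)) :=
        Filter.Tendsto.const_add _ tendsto_one_div_add_atTop_nhds_zero_nat
      rw [add_zero] at h0
      exact Filter.Tendsto.const_add _ (h0.smul_const c)
    refine mem_closure_of_tendsto htend (Filter.Eventually.of_forall fun k => ?_)
    simp only [Set.mem_compl_iff, hMhat, Set.mem_iInter, not_forall]
    refine ⟨i', ?_⟩
    simp only [Set.mem_setOf_eq, not_le, key]
    have h1 : lamstar * ⟪a i', c⟫ = -(⟪a i', z⟫ - b i') := by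
      rw [hls, neg_mul, neg_inj, div_mul_cancel₀ _ (hrec i').ne']
    have hkpos : (0:ℝ) < 1/(k+1) := by positivity
    have h2 : (lamstar + 1/((k:ℝ)+1)) * ⟪a i', c⟫ =
        lamstar * ⟪a i', c⟫ + (1/((k:ℝ)+1)) * ⟪a i', c⟫ := by ring
    have h3 : (0:ℝ) < 1/((k:ℝ)+1) * ⟪a i', c⟫ := mul_pos hkpos (hrec i')
    linarith
end

section
/- Let ⟨a_{i'}, c⟩ > 0, let u' satisfy ⟨a_{i'}, u'⟩ = b_{i'}, and let u'' satisfy ⟨a_{i'}, u''⟩ ≤ b_{i'} and ⟨c, u'' − u'⟩ > 0. Let p = u'' − (⟨c, u'' − u'⟩/‖c‖²)·c, assume p ≠ u', fix any r > 0, set v' = u' + (r/‖p − u'‖)·(p − u'), and let w' = γ_{i'}(v') = v' − ((⟨a_{i'}, v'⟩ − b_{i'})/⟨a_{i'}, c⟩)·c be the objective projection of v' onto the hyperplane H_{i'}. Then ⟨c, w' − u'⟩ > 0, i.e., the objective function value at w' strictly exceeds its value at u'. -/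
open scoped RealInnerProductSpace

/-!
The direction `p - u'` is orthogonal to `c`, and it points strictly into the open half-space
`⟪a, x⟫ < b`: `p` arises from `u'' ∈ Ĥ` by subtracting a positive multiple of `c`, and
`⟪a, c⟫ > 0`. Hence `v'` lies on the objective hyperplane through `u'`, strictly inside `Ĥ`, and
the objective projection moves it back to `H` by a positive multiple of `c`, which raises the
objective above its value at `u'`.
-/

variable {E : Type*} [NormedAddCommGroup E] [InnerProductSpace ℝ E]

noncomputable def objectiveProj (a c : E) (b : ℝ) (z : E) : E :=
  z - ((⟪a, z⟫ - b) / ⟪a, c⟫) • c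

noncomputable def objectiveHyperplaneProj (c u' u'' : E) : E :=
  u'' - (⟪c, u'' - u'⟫ / ‖c‖ ^ 2) • c

theorem inner_objectiveProj_sub (a c u z : E) (b : ℝ) :
    ⟪c, objectiveProj a c b z - u⟫ = ⟪c, z - u⟫ - (⟪a, z⟫ - b) / ⟪a, c⟫ * ‖c‖ ^ 2 := by
  rw [objectiveProj, sub_right_comm, inner_sub_right, inner_smul_right,
    real_inner_self_eq_norm_sq]

theorem inner_sub_lt_inner_objectiveProj_sub {a c u z : E} {b : ℝ} (hc : c ≠ 0)
    (hac : 0 < ⟪a, c⟫) (hz : ⟪a, z⟫ < b) :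
    ⟪c, z - u⟫ < ⟪c, objectiveProj a c b z - u⟫ := by
  have hshift : (⟪a, z⟫ - b) / ⟪a, c⟫ * ‖c‖ ^ 2 < 0 :=
    mul_neg_of_neg_of_pos (div_neg_of_neg_of_pos (sub_neg.mpr hz) hac) (by positivity)
  rw [inner_objectiveProj_sub]
  linarith

theorem objectiveHyperplaneProj_sub (c u' u'' : E) :
    objectiveHyperplaneProj c u' u'' - u' = (u'' - u') - (⟪c, u'' - u'⟫ / ‖c‖ ^ 2) • c := by
  rw [objectiveHyperplaneProj, sub_right_comm]

theorem inner_objectiveHyperplaneProj_sub {c : E} (hc : c ≠ 0) (u' u'' : E) :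
    ⟪c, objectiveHyperplaneProj c u' u'' - u'⟫ = 0 := by
  have : ‖c‖ ^ 2 ≠ 0 := by positivity
  rw [objectiveHyperplaneProj_sub, inner_sub_right, inner_smul_right,
    real_inner_self_eq_norm_sq, div_mul_cancel₀ _ this, sub_self]

theorem inner_objectiveHyperplaneProj_sub_neg {a c u' u'' : E} (hc : c ≠ 0)
    (hac : 0 < ⟪a, c⟫) (hu'' : ⟪a, u''⟫ ≤ ⟪a, u'⟫) (hlt : 0 < ⟪c, u'' - u'⟫) :
    ⟪a, objectiveHyperplaneProj c u' u'' - u'⟫ < 0 := by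
  have hstep : 0 < ⟪c, u'' - u'⟫ / ‖c‖ ^ 2 * ⟪a, c⟫ := by positivity
  rw [objectiveHyperplaneProj_sub, inner_sub_right, inner_smul_right, inner_sub_right]
  linarith

theorem objective_increases_along_face_general {n : ℕ}
    (a c : EuclideanSpace ℝ (Fin n)) (b : ℝ)
    (hc : c ≠ 0) (hac : 0 < ⟪a, c⟫)
    (u' u'' : EuclideanSpace ℝ (Fin n))
    (hu' : ⟪a, u'⟫ = b) (hu'' : ⟪a, u''⟫ ≤ b)
    (hlt : 0 < ⟪c, u'' - u'⟫)
    (p : EuclideanSpace ℝ (Fin n))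
    (hp : p = u'' - (⟪c, u'' - u'⟫ / ‖c‖ ^ 2) • c)
    (hpne : p ≠ u')
    (r : ℝ) (hr : 0 < r)
    (v' : EuclideanSpace ℝ (Fin n))
    (hv' : v' = u' + (r / ‖p - u'‖) • (p - u'))
    (w' : EuclideanSpace ℝ (Fin n))
    (hw' : w' = v' - ((⟪a, v'⟫ - b) / ⟪a, c⟫) • c) :
    0 < ⟪c, w' - u'⟫ := by
  change p = objectiveHyperplaneProj c u' u'' at hp
  change w' = objectiveProj a c b v' at hw'
  have hp_c : ⟪c, p - u'⟫ = 0 := hp ▸ inner_objectiveHyperplaneProj_sub hc u' u''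
  have hp_a : ⟪a, p - u'⟫ < 0 :=
    hp ▸ inner_objectiveHyperplaneProj_sub_neg hc hac (hu' ▸ hu'') hlt
  have hs : 0 < r / ‖p - u'‖ := div_pos hr (norm_pos_iff.mpr (sub_ne_zero.mpr hpne))
  have hv_c : ⟪c, v' - u'⟫ = 0 := by
    rw [hv', add_sub_cancel_left, inner_smul_right, hp_c, mul_zero]
  have hv_a : ⟪a, v'⟫ < b := by
    rw [hv', inner_add_right, inner_smul_right, hu']
    exact add_lt_of_neg_right _ (mul_neg_of_pos_of_neg hs hp_a)
  simpa only [hw', hv_c] using inner_sub_lt_inner_objectiveProj_sub (u := u') hc hac hv_a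

/-- With `Ĥ_{i'}` recessive, `u'` on its bounding hyperplane, `u'' ∈ Ĥ_{i'}` with
`⟪c, u'' − u'⟫ > 0`, `p` the orthogonal projection of `u''` onto the objective
hyperplane through `u'` with `p ≠ u'`, any `r > 0`,
`v' = u' + (r/‖p − u'‖) • (p − u')`, and `w' = γ_{i'}(v')` the objective projection
of `v'` onto `H_{i'}`, one has `⟪c, w' − u'⟫ > 0`. -/
theorem objective_increases_along_face {n : ℕ}
    (a c : EuclideanSpace ℝ (Fin n)) (b : ℝ)
    (ha : a ≠ 0) (hc : c ≠ 0) (hac : 0 < ⟪a, c⟫)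
    (u' u'' : EuclideanSpace ℝ (Fin n))
    (hu' : ⟪a, u'⟫ = b) (hu'' : ⟪a, u''⟫ ≤ b)
    (hlt : 0 < ⟪c, u'' - u'⟫)
    (p : EuclideanSpace ℝ (Fin n))
    (hp : p = u'' - (⟪c, u'' - u'⟫ / ‖c‖ ^ 2) • c)
    (hpne : p ≠ u')
    (r : ℝ) (hr : 0 < r)
    (v' : EuclideanSpace ℝ (Fin n))
    (hv' : v' = u' + (r / ‖p - u'‖) • (p - u'))
    (w' : EuclideanSpace ℝ (Fin n))
    (hw' : w' = v' - ((⟪a, v'⟫ - b) / ⟪a, c⟫) • c) :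
    0 < ⟪c, w' - u'⟫ :=
  objective_increases_along_face_general a c b hc hac u' u'' hu' hu'' hlt p hp hpne r hr v' hv' w'
    hw'
end

section
/- Let M = ∩_{i ∈ P} Ĥ_i be nonempty and bounded, c ≠ 0, let I = {i ∈ P : ⟨a_i, c⟩ > 0} and M̂ = ∩_{i ∈ I} Ĥ_i. Suppose u' ∈ M lies on the boundary Γ(M̂) of the recessive polytope, and suppose u' is not optimal, i.e., there exists u'' ∈ M with ⟨c, u''⟩ > ⟨c, u'⟩. Then there exist a recessive index i' ∈ I and a point w' ∈ Γ(M̂) such that both u' and w' lie on the hyperplane H_{i'} (that is, ⟨a_{i'}, u'⟩ = b_{i'} and ⟨a_{i'}, w'⟩ = b_{i'}) and ⟨c, w'⟩ > ⟨c, u'⟩. In other words, from any non-optimal boundary point of M lying on Γ(M̂) one can strictly increase the objective value while moving along a common face of the recessive polytope. -/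
open scoped RealInnerProductSpace

/-- A point of the recessive polytope at which a recessive constraint is active
lies on its frontier. -/
lemma aux_mem_frontier_of_active {n m : ℕ}
    (a : Fin m → EuclideanSpace ℝ (Fin n)) (b : Fin m → ℝ)
    (c : EuclideanSpace ℝ (Fin n)) (i' : Fin m) (hai : a i' ≠ 0)
    (hi' : 0 < ⟪a i', c⟫) (w : EuclideanSpace ℝ (Fin n))
    (hw : ∀ i, 0 < ⟪a i, c⟫ → ⟪a i, w⟫ ≤ b i) (heq : ⟪a i', w⟫ = b i') :
    w ∈ frontier (⋂ i ∈ {i : Fin m | 0 < ⟪a i, c⟫},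
      {x : EuclideanSpace ℝ (Fin n) | ⟪a i, x⟫ ≤ b i}) := by
  have hwmem : w ∈ ⋂ i ∈ {i : Fin m | 0 < ⟪a i, c⟫},
      {x : EuclideanSpace ℝ (Fin n) | ⟪a i, x⟫ ≤ b i} := by
    simp only [Set.mem_iInter, Set.mem_setOf_eq]
    intro i hi; exact hw i hi
  constructor
  · exact subset_closure hwmem
  · intro hint
    rw [mem_interior_iff_mem_nhds, Metric.mem_nhds_iff] at hint
    obtain ⟨ε, hε, hball⟩ := hint
    have hna : (0:ℝ) < ‖a i'‖ := norm_pos_iff.mpr hai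
    set δ : ℝ := ε / (2 * ‖a i'‖) with hδ
    have hδpos : 0 < δ := by positivity
    have hy : w + δ • a i' ∈ Metric.ball w ε := by
      rw [Metric.mem_ball, dist_eq_norm, add_sub_cancel_left, norm_smul,
        Real.norm_eq_abs, abs_of_pos hδpos, hδ]
      have hne' : ‖a i'‖ ≠ 0 := ne_of_gt hna
      have : ε / (2 * ‖a i'‖) * ‖a i'‖ = ε / 2 := by field_simp
      linarith
    have := hball hy
    simp only [Set.mem_iInter, Set.mem_setOf_eq] at this
    have h2 := this i' hi'
    rw [inner_add_right, real_inner_smul_right, heq] at h2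
    have : 0 < δ * ⟪a i', a i'⟫ :=
      mul_pos hδpos (by rw [real_inner_self_eq_norm_mul_norm]; exact mul_pos hna hna)
    linarith

/-- From any non-optimal point `u' ∈ M` lying on the boundary of the recessive polytope
`M̂`, one can strictly increase the objective while staying on a common face of `M̂`:
there exist a recessive index `i'` and `w'` on the boundary of `M̂` such that both `u'`
and `w'` lie on the hyperplane `H_{i'}` and `⟪c, w'⟫ > ⟪c, u'⟫`. -/
theorem strict_improvement_on_recessive_boundary {n m : ℕ} (hm : 1 < m)
    (a : Fin m → EuclideanSpace ℝ (Fin n)) (b : Fin m → ℝ)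
    (ha : ∀ i, a i ≠ 0)
    (c : EuclideanSpace ℝ (Fin n)) (hc : c ≠ 0)
    (M : Set (EuclideanSpace ℝ (Fin n)))
    (hM : M = ⋂ i, {x : EuclideanSpace ℝ (Fin n) | ⟪a i, x⟫ ≤ b i})
    (hne : M.Nonempty) (hbd : Bornology.IsBounded M)
    (Mhat : Set (EuclideanSpace ℝ (Fin n)))
    (hMhat : Mhat = ⋂ i ∈ {i : Fin m | 0 < ⟪a i, c⟫},
      {x : EuclideanSpace ℝ (Fin n) | ⟪a i, x⟫ ≤ b i})
    (u' : EuclideanSpace ℝ (Fin n)) (hu'M : u' ∈ M) (hu'F : u' ∈ frontier Mhat)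
    (u'' : EuclideanSpace ℝ (Fin n)) (hu''M : u'' ∈ M)
    (hbetter : ⟪c, u'⟫ < ⟪c, u''⟫) :
    ∃ i' : Fin m, 0 < ⟪a i', c⟫ ∧
      ∃ w' ∈ frontier Mhat,
        ⟪a i', u'⟫ = b i' ∧ ⟪a i', w'⟫ = b i' ∧ ⟪c, u'⟫ < ⟪c, w'⟫ := by
  classical
  subst hM hMhat
  simp only [Set.mem_iInter, Set.mem_setOf_eq] at hu'M hu''M
  -- the set of active recessive constraints at u'
  set A : Finset (Fin m) :=
    Finset.univ.filter (fun i => 0 < ⟪a i, c⟫ ∧ ⟪a i, u'⟫ = b i) with hA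
  have hmemA : ∀ i, i ∈ A ↔ 0 < ⟪a i, c⟫ ∧ ⟪a i, u'⟫ = b i := by
    intro i; simp [hA]
  -- A is nonempty, since u' is on the frontier
  have hAne : A.Nonempty := by
    by_contra hemp
    rw [Finset.not_nonempty_iff_eq_empty] at hemp
    have hstrict : ∀ i, 0 < ⟪a i, c⟫ → ⟪a i, u'⟫ < b i := by
      intro i hi
      rcases lt_or_eq_of_le (hu'M i) with h | h
      · exact h
      · exact absurd ((hmemA i).mpr ⟨hi, h⟩) (by simp [hemp])
    have hop : IsOpen (⋂ i ∈ {i : Fin m | 0 < ⟪a i, c⟫},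
        {x : EuclideanSpace ℝ (Fin n) | ⟪a i, x⟫ < b i}) := by
      apply (Set.toFinite _).isOpen_biInter
      intro i _
      exact isOpen_lt (Continuous.inner continuous_const continuous_id)
        continuous_const
    have hsub : (⋂ i ∈ {i : Fin m | 0 < ⟪a i, c⟫},
        {x : EuclideanSpace ℝ (Fin n) | ⟪a i, x⟫ < b i}) ⊆
        ⋂ i ∈ {i : Fin m | 0 < ⟪a i, c⟫},
        {x : EuclideanSpace ℝ (Fin n) | ⟪a i, x⟫ ≤ b i} := by
      intro x hx
      simp only [Set.mem_iInter, Set.mem_setOf_eq] at hx ⊢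
      exact fun i hi => (hx i hi).le
    have hint : u' ∈ interior (⋂ i ∈ {i : Fin m | 0 < ⟪a i, c⟫},
        {x : EuclideanSpace ℝ (Fin n) | ⟪a i, x⟫ ≤ b i}) :=
      interior_maximal hsub hop (by
        simp only [Set.mem_iInter, Set.mem_setOf_eq]
        exact fun i hi => hstrict i hi)
    exact hu'F.2 hint
  -- the step size toward c
  set d := u'' - u' with hd
  have hdc : 0 < ⟪c, d⟫ := by
    rw [hd, inner_sub_right]; linarith
  have hAd : ∀ i ∈ A, ⟪a i, d⟫ ≤ 0 := by
    intro i hi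
    obtain ⟨hic, hieq⟩ := (hmemA i).mp hi
    rw [hd, inner_sub_right, hieq]
    linarith [hu''M i]
  set f : Fin m → ℝ := fun i => -⟪a i, d⟫ / ⟪a i, c⟫ with hf
  set s : ℝ := A.inf' hAne f with hs
  obtain ⟨i', hi'A, hi'eq⟩ := A.exists_mem_eq_inf' hAne f
  obtain ⟨hi'c, hi'act⟩ := (hmemA i').mp hi'A
  have hs0 : 0 ≤ s := by
    rw [hs, Finset.le_inf'_iff]
    intro i hi
    obtain ⟨hic, _⟩ := (hmemA i).mp hi
    have hd0 := hAd i hi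
    simp only [hf]
    apply div_nonneg (by linarith) (le_of_lt hic)
  set e := d + s • c with he
  have hie' : ⟪a i', e⟫ = 0 := by
    rw [he, inner_add_right, real_inner_smul_right, hs, hi'eq, hf,
      div_mul_cancel₀ _ (ne_of_gt hi'c)]
    ring
  have hAe : ∀ i ∈ A, ⟪a i, e⟫ ≤ 0 := by
    intro i hi
    obtain ⟨hic, _⟩ := (hmemA i).mp hi
    have hsle : s ≤ f i := Finset.inf'_le f hi
    rw [he, inner_add_right, real_inner_smul_right]
    have : s * ⟪a i, c⟫ ≤ f i * ⟪a i, c⟫ :=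
      mul_le_mul_of_nonneg_right hsle (le_of_lt hic)
    rw [hf, div_mul_cancel₀ _ (ne_of_gt hic)] at this
    linarith
  have hce : 0 < ⟪c, e⟫ := by
    rw [he, inner_add_right, real_inner_smul_right]
    have : 0 ≤ s * ⟪c, c⟫ := mul_nonneg hs0 real_inner_self_nonneg
    linarith
  -- the step length
  set g : Fin m → ℝ := fun i =>
    if 0 < ⟪a i, c⟫ ∧ ⟪a i, u'⟫ < b i ∧ 0 < ⟪a i, e⟫
    then (b i - ⟪a i, u'⟫) / ⟪a i, e⟫ else 1 with hg
  have hgpos : ∀ i, 0 < g i := by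
    intro i
    simp only [hg]
    split_ifs with h
    · obtain ⟨_, h1, h2⟩ := h; exact div_pos (by linarith) h2
    · norm_num
  have : Nonempty (Fin m) := ⟨⟨0, by omega⟩⟩
  have hune : (Finset.univ : Finset (Fin m)).Nonempty := Finset.univ_nonempty
  set t : ℝ := Finset.univ.inf' hune g with ht
  have htpos : 0 < t := by
    rw [ht, Finset.lt_inf'_iff]
    exact fun i _ => hgpos i
  set w' := u' + t • e with hw'
  -- w' lies in the recessive polytope
  have hw'mem : ∀ i, 0 < ⟪a i, c⟫ → ⟪a i, w'⟫ ≤ b i := by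
    intro i hic
    rw [hw', inner_add_right, real_inner_smul_right]
    rcases eq_or_lt_of_le (hu'M i) with heqi | hlti
    · have hiA : i ∈ A := (hmemA i).mpr ⟨hic, heqi⟩
      have := hAe i hiA
      nlinarith
    · rcases le_or_gt ⟪a i, e⟫ 0 with hle | hgt
      · nlinarith
      · have htle : t ≤ g i := Finset.inf'_le g (Finset.mem_univ i)
        have hgi : g i = (b i - ⟪a i, u'⟫) / ⟪a i, e⟫ := by
          simp only [hg]
          split_ifs with h
          · rfl
          · exact absurd ⟨hic, hlti, hgt⟩ h
        rw [hgi] at htle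
        have hmul := mul_le_mul_of_nonneg_right htle (le_of_lt hgt)
        rw [div_mul_cancel₀ _ (ne_of_gt hgt)] at hmul
        linarith
  have hw'eq : ⟪a i', w'⟫ = b i' := by
    rw [hw', inner_add_right, real_inner_smul_right, hie', hi'act]; ring
  refine ⟨i', hi'c, w', ?_, hi'act, hw'eq, ?_⟩
  · exact aux_mem_frontier_of_active a b c i' (ha i') hi'c w' hw'mem hw'eq
  · rw [hw', inner_add_right, real_inner_smul_right]
    nlinarith
end
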